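/- arXiv:2212.10023 — 2 statements merged into one kernel-verified Lean document; each statement's English description precedes it below -/
import Mathlib

section
/- For any t > 0, γ > 0, σ > 0, C₀ ∈ ℝ with σ > 2C₀, and σ₃ ≥ 0, the integral ∫₀^∞ e^{−γ t/(2s)} e^{(2C₀−σ)s} (1 + √(σ₃ s)) s^{−1/2} |s^{−1/2} − 1_{s ≥ t}(s−t)^{−1/2}| ds equals, after the substitution s = t u, the t-independent quantity ∫₀^∞ e^{−γ/(2u)} e^{(2C₀−σ)t u}(1+√(σ₃ t u)) |1/u − 1_{u≥1}/√(u(u−1))| du, and this is bounded above uniformly in t by a finite constant C(γ, σ−2C₀, σ₃) · (∫₀¹ e^{−γ/(2u)}/u du + ∫₁^∞ (1/√(u(u−1)) − 1/u) du). -/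
/-!
Substituting `s = t u` turns the kernel into a `t`-independent profile times the weight
`exp ((2 C₀ - σ) t u) (1 + √(σ₃ t u))`, which is bounded uniformly in `t` because
`√y ≤ exp y`. On `(0, 1]` the profile is `exp (-γ / (2u)) / u`; on `(1, ∞)` it is at most
`1 / √(u (u - 1)) - 1 / u`, which behaves like `(u - 1)^(-1/2)` near `1` and like `(u - 1)^(-2)`
at infinity, hence is integrable.
-/

open MeasureTheory Real Set

lemma Real.sqrt_mul_exp_neg_le_one {y : ℝ} (hy : 0 ≤ y) : √y * exp (-y) ≤ 1 := by
  have hsqrt : √y ≤ exp y := by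
    nlinarith [sq_sqrt hy, sqrt_nonneg y, add_one_le_exp y]
  rw [exp_neg, ← div_eq_mul_inv, div_le_one (exp_pos y)]
  exact hsqrt

lemma Real.exp_mul_mul_one_add_sqrt_le {c b x : ℝ} (hc : c < 0) (hx : 0 ≤ x) :
    exp (c * x) * (1 + √(b * x)) ≤ 1 + √(b / -c) := by
  have hcx : 0 ≤ -c * x := mul_nonneg (by linarith) hx
  have hbx : √(b * x) = √(b / -c) * √(-c * x) := by
    rw [← sqrt_mul' _ hcx, div_mul_eq_mul_div, mul_left_comm,
      mul_div_cancel_left₀ _ (neg_ne_zero.2 hc.ne)]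
  have hexp : exp (c * x) ≤ 1 := exp_le_one_iff.mpr (by nlinarith)
  calc exp (c * x) * (1 + √(b * x))
      = exp (c * x) + √(b / -c) * (√(-c * x) * exp (-(-c * x))) := by
        rw [hbx, neg_mul, neg_neg]; ring
    _ ≤ 1 + √(b / -c) * 1 := by
        gcongr
        exact sqrt_mul_exp_neg_le_one hcx
    _ = 1 + √(b / -c) := by rw [mul_one]

lemma Real.exp_neg_div_div_le {γ u : ℝ} (hγ : 0 < γ) (hu : 0 < u) :
    exp (-γ / (2 * u)) / u ≤ 2 / γ := by
  have hexp : exp (-γ / (2 * u)) ≤ 2 * u / γ := by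
    rw [neg_div, exp_neg, ← inv_div γ]
    exact inv_anti₀ (by positivity) (by linarith [add_one_le_exp (γ / (2 * u))])
  calc exp (-γ / (2 * u)) / u ≤ 2 * u / γ / u := by gcongr
    _ = 2 / γ := by field_simp

lemma inv_sqrt_mul_sub_scale {t u : ℝ} (ht : 0 < t) (hu : 0 < u) :
    1 / √(t * u) * (1 / √(t * u) - (if t ≤ t * u then 1 / √(t * u - t) else 0)) =
      t⁻¹ * (1 / u - (if 1 ≤ u then 1 / √(u * (u - 1)) else 0)) := by
  have hdiag : 1 / √(t * u) * (1 / √(t * u)) = t⁻¹ * (1 / u) := by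
    rw [one_div_mul_one_div, mul_self_sqrt (by positivity)]
    ring
  have hoff : 1 / √(t * u) * (1 / √(t * u - t)) = t⁻¹ * (1 / √(u * (u - 1))) := by
    rw [one_div_mul_one_div, ← sqrt_mul (by positivity),
      show t * u * (t * u - t) = t ^ 2 * (u * (u - 1)) by ring, sqrt_mul (by positivity),
      sqrt_sq ht.le]
    ring
  simp only [le_mul_iff_one_le_right ht]
  split_ifs
  · rw [mul_sub, mul_sub, hdiag, hoff]
  · rw [sub_zero, sub_zero, hdiag]

lemma inv_sqrt_mul_abs_sub_scale {t u : ℝ} (ht : 0 < t) (hu : 0 < u) :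
    1 / √(t * u) * |1 / √(t * u) - (if t ≤ t * u then 1 / √(t * u - t) else 0)| =
      t⁻¹ * |1 / u - (if 1 ≤ u then 1 / √(u * (u - 1)) else 0)| := by
  rw [← abs_of_nonneg (inv_nonneg.2 ht.le), ← abs_mul, ← inv_sqrt_mul_sub_scale ht hu, abs_mul,
    abs_of_nonneg (by positivity : 0 ≤ 1 / √(t * u))]

lemma integral_Ioi_kernel_comp_mul_left (γ c b : ℝ) {t : ℝ} (ht : 0 < t) :
    (∫ s in Ioi (0 : ℝ), exp (-γ * t / (2 * s)) * exp (c * s) * (1 + √(b * s)) * (1 / √s) *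
        |1 / √s - (if t ≤ s then 1 / √(s - t) else 0)|) =
      ∫ u in Ioi (0 : ℝ), exp (-γ / (2 * u)) * exp (c * (t * u)) * (1 + √(b * (t * u))) *
        |1 / u - (if 1 ≤ u then 1 / √(u * (u - 1)) else 0)| := by
  have hcv := integral_comp_mul_left_Ioi (fun s => exp (-γ * t / (2 * s)) * exp (c * s) *
    (1 + √(b * s)) * (1 / √s) * |1 / √s - (if t ≤ s then 1 / √(s - t) else 0)|) 0 ht
  rw [mul_zero, smul_eq_mul, eq_inv_mul_iff_mul_eq₀ ht.ne'] at hcv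
  rw [← hcv, ← integral_const_mul]
  refine setIntegral_congr_fun measurableSet_Ioi fun u hu => ?_
  have hγ : -γ * t / (2 * (t * u)) = -γ / (2 * u) := by field_simp
  simp only [hγ, mul_assoc, inv_sqrt_mul_abs_sub_scale ht hu]
  field_simp

lemma abs_one_div_sub_ite_of_le_one {u : ℝ} (hu : 0 < u) (hu1 : u ≤ 1) :
    |1 / u - (if 1 ≤ u then 1 / √(u * (u - 1)) else 0)| = 1 / u := by
  split_ifs with h
  · -- at `u = 1` the singular term is the junk value `1 / √0 = 0`
    obtain rfl : u = 1 := le_antisymm hu1 h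
    norm_num
  · rw [sub_zero, abs_of_pos (one_div_pos.2 hu)]

lemma sub_one_le_sqrt_mul_sub_one {u : ℝ} (hu : 1 ≤ u) : u - 1 ≤ √(u * (u - 1)) :=
  le_sqrt_of_sq_le (by nlinarith)

lemma one_div_sqrt_mul_sub_one_sub_one_div_nonneg {u : ℝ} (hu : 1 < u) :
    0 ≤ 1 / √(u * (u - 1)) - 1 / u := by
  rw [sub_nonneg]
  exact one_div_le_one_div_of_le (sqrt_pos.2 (by nlinarith))
    (sqrt_le_iff.mpr ⟨by linarith, by nlinarith⟩)

lemma abs_one_div_sub_ite_of_one_lt {u : ℝ} (hu : 1 < u) :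
    |1 / u - (if 1 ≤ u then 1 / √(u * (u - 1)) else 0)| = 1 / √(u * (u - 1)) - 1 / u := by
  rw [if_pos hu.le, abs_sub_comm, abs_of_nonneg (one_div_sqrt_mul_sub_one_sub_one_div_nonneg hu)]

lemma one_div_sqrt_mul_sub_one_sub_one_div_le_rpow_neg_half {u : ℝ} (hu : 1 < u) :
    1 / √(u * (u - 1)) - 1 / u ≤ (u - 1) ^ (-(1 / 2) : ℝ) := by
  have h1 : 0 < u - 1 := by linarith
  rw [rpow_neg h1.le, ← sqrt_eq_rpow, ← one_div]
  have : 1 / √(u * (u - 1)) ≤ 1 / √(u - 1) :=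
    one_div_le_one_div_of_le (sqrt_pos.2 h1) (sqrt_le_sqrt (by nlinarith))
  linarith [one_div_pos.2 (by linarith : 0 < u)]

lemma one_div_sqrt_mul_sub_one_sub_one_div_le_rpow_neg_two {u : ℝ} (hu : 1 < u) :
    1 / √(u * (u - 1)) - 1 / u ≤ (u - 1) ^ (-2 : ℝ) := by
  have h1 : 0 < u - 1 := by linarith
  set s := √(u * (u - 1))
  have hs : u - 1 ≤ s := sub_one_le_sqrt_mul_sub_one hu.le
  rw [rpow_neg h1.le, rpow_two, ← one_div, div_sub_div _ _ (by positivity) (by positivity)]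
  calc (1 * u - s * 1) / (s * u) ≤ 1 / (s * u) := by gcongr; linarith
    _ ≤ 1 / (u - 1) ^ 2 := by gcongr; nlinarith

lemma MeasureTheory.IntegrableOn.of_forall_norm_le {α E : Type*} [MeasurableSpace α]
    [NormedAddCommGroup E] {μ : Measure α} {s : Set α} {f : α → E} {g : α → ℝ}
    (hg : IntegrableOn g s μ) (hs : MeasurableSet s) (hf : AEStronglyMeasurable f (μ.restrict s))
    (h : ∀ x ∈ s, ‖f x‖ ≤ g x) : IntegrableOn f s μ :=
  hg.mono' hf (ae_restrict_of_forall_mem hs h)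

lemma integrableOn_one_div_sqrt_mul_sub_one_sub_one_div :
    IntegrableOn (fun u : ℝ => 1 / √(u * (u - 1)) - 1 / u) (Ioi 1) := by
  have hmeas : AEStronglyMeasurable (fun u : ℝ => 1 / √(u * (u - 1)) - 1 / u) :=
    (by fun_prop : Measurable fun u : ℝ => 1 / √(u * (u - 1)) - 1 / u).aestronglyMeasurable
  have hnorm : ∀ u > (1 : ℝ), ‖1 / √(u * (u - 1)) - 1 / u‖ = 1 / √(u * (u - 1)) - 1 / u :=
    fun u hu => norm_of_nonneg (one_div_sqrt_mul_sub_one_sub_one_div_nonneg hu)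
  rw [← Ioc_union_Ioi_eq_Ioi one_le_two]
  refine IntegrableOn.union ?_ ?_
  · have hg : IntegrableOn (fun u : ℝ => (u - 1) ^ (-(1 / 2) : ℝ)) (Ioc 1 2) := by
      rw [← intervalIntegrable_iff_integrableOn_Ioc_of_le one_le_two]
      simpa [one_add_one_eq_two] using (intervalIntegral.intervalIntegrable_rpow' (a := 0)
        (b := 1) (r := -(1 / 2)) (by norm_num)).comp_sub_right 1
    refine hg.of_forall_norm_le measurableSet_Ioc hmeas.restrict fun u hu => ?_
    rw [hnorm u hu.1]
    exact one_div_sqrt_mul_sub_one_sub_one_div_le_rpow_neg_half hu.1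
  · have hg : IntegrableOn (fun u : ℝ => (u - 1) ^ (-2 : ℝ)) (Ioi 2) := by
      simpa [sub_eq_add_neg] using integrableOn_add_rpow_Ioi_of_lt (a := -2) (m := -1) (c := 2)
        (by norm_num) (by norm_num)
    refine hg.of_forall_norm_le measurableSet_Ioi hmeas.restrict fun u hu => ?_
    have hu1 : 1 < u := one_lt_two.trans hu
    rw [hnorm u hu1]
    exact one_div_sqrt_mul_sub_one_sub_one_div_le_rpow_neg_two hu1

lemma integrableOn_exp_neg_div_div {γ : ℝ} (hγ : 0 < γ) :
    IntegrableOn (fun u : ℝ => exp (-γ / (2 * u)) / u) (Ioc 0 1) := by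
  refine Measure.integrableOn_of_bounded (M := 2 / γ) (by simp)
    (by fun_prop : Measurable fun u : ℝ => exp (-γ / (2 * u)) / u).aestronglyMeasurable
    (ae_restrict_of_forall_mem measurableSet_Ioc fun u hu => ?_)
  rw [norm_of_nonneg (div_nonneg (exp_pos _).le hu.1.le)]
  exact exp_neg_div_div_le hγ hu.1

lemma setIntegral_Ioi_le_add {f g₁ g₂ : ℝ → ℝ} {a b : ℝ} (hab : a ≤ b)
    (hf : AEStronglyMeasurable f (volume.restrict (Ioi a)))
    (hg₁ : IntegrableOn g₁ (Ioc a b)) (hg₂ : IntegrableOn g₂ (Ioi b))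
    (h₁ : ∀ x ∈ Ioc a b, ‖f x‖ ≤ g₁ x) (h₂ : ∀ x ∈ Ioi b, ‖f x‖ ≤ g₂ x) :
    ∫ x in Ioi a, f x ≤ (∫ x in Ioc a b, g₁ x) + ∫ x in Ioi b, g₂ x := by
  have hf₁ : IntegrableOn f (Ioc a b) :=
    hg₁.of_forall_norm_le measurableSet_Ioc (hf.mono_set Ioc_subset_Ioi_self) h₁
  have hf₂ : IntegrableOn f (Ioi b) :=
    hg₂.of_forall_norm_le measurableSet_Ioi (hf.mono_set (Ioi_subset_Ioi hab)) h₂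
  rw [← Ioc_union_Ioi_eq_Ioi hab, setIntegral_union (Ioc_disjoint_Ioi le_rfl) measurableSet_Ioi
    hf₁ hf₂]
  exact add_le_add
    (setIntegral_mono_on hf₁ hg₁ measurableSet_Ioc fun x hx => (le_abs_self _).trans (h₁ x hx))
    (setIntegral_mono_on hf₂ hg₂ measurableSet_Ioi fun x hx => (le_abs_self _).trans (h₂ x hx))

theorem stmt_5_general (γ σ C₀ σ₃ : ℝ) (hγ : 0 < γ) (hσC₀ : 2 * C₀ < σ) :
    ∃ C : ℝ, 0 < C ∧ ∀ t : ℝ, 0 < t →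
      (∫ s in Ioi (0 : ℝ),
          Real.exp (-γ * t / (2 * s)) * Real.exp ((2 * C₀ - σ) * s) *
            (1 + Real.sqrt (σ₃ * s)) * (1 / Real.sqrt s) *
            |1 / Real.sqrt s - (if t ≤ s then 1 / Real.sqrt (s - t) else 0)|) =
        (∫ u in Ioi (0 : ℝ),
          Real.exp (-γ / (2 * u)) * Real.exp ((2 * C₀ - σ) * (t * u)) *
            (1 + Real.sqrt (σ₃ * (t * u))) *
            |1 / u - (if 1 ≤ u then 1 / Real.sqrt (u * (u - 1)) else 0)|) ∧
      (∫ s in Ioi (0 : ℝ),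
          Real.exp (-γ * t / (2 * s)) * Real.exp ((2 * C₀ - σ) * s) *
            (1 + Real.sqrt (σ₃ * s)) * (1 / Real.sqrt s) *
            |1 / Real.sqrt s - (if t ≤ s then 1 / Real.sqrt (s - t) else 0)|) ≤
        C * ((∫ u in Ioc (0 : ℝ) 1, Real.exp (-γ / (2 * u)) / u) +
             (∫ u in Ioi (1 : ℝ), (1 / Real.sqrt (u * (u - 1)) - 1 / u))) := by
  set K := 1 + √(σ₃ / -(2 * C₀ - σ))
  have hweight : ∀ x, 0 ≤ x → exp ((2 * C₀ - σ) * x) * (1 + √(σ₃ * x)) ≤ K :=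
    fun x hx => exp_mul_mul_one_add_sqrt_le (by linarith) hx
  have hite : Measurable fun u : ℝ => if 1 ≤ u then 1 / √(u * (u - 1)) else 0 :=
    Measurable.ite measurableSet_Ici (by fun_prop) measurable_const
  refine ⟨K, by positivity, fun t ht => ?_⟩
  rw [integral_Ioi_kernel_comp_mul_left γ _ _ ht, mul_add, ← integral_const_mul,
    ← integral_const_mul]
  refine ⟨rfl, setIntegral_Ioi_le_add zero_le_one (by fun_prop : Measurable _).aestronglyMeasurable
    ((integrableOn_exp_neg_div_div hγ).const_mul K)
    (integrableOn_one_div_sqrt_mul_sub_one_sub_one_div.const_mul K) (fun u hu => ?_)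
    (fun u hu => ?_)⟩
  · rw [norm_of_nonneg (by positivity), abs_one_div_sub_ite_of_le_one hu.1 hu.2]
    have hu0 : 0 < u := hu.1
    have hweight' := hweight (t * u) (by positivity)
    calc _ = exp ((2 * C₀ - σ) * (t * u)) * (1 + √(σ₃ * (t * u))) * (exp (-γ / (2 * u)) / u) := by
          ring
      _ ≤ K * (exp (-γ / (2 * u)) / u) := by gcongr
  · have hu1 : (1 : ℝ) < u := hu
    rw [norm_of_nonneg (by positivity), abs_one_div_sub_ite_of_one_lt hu1]
    have hweight' := hweight (t * u) (by positivity)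
    have hexp : exp (-γ / (2 * u)) ≤ 1 :=
      exp_le_one_iff.mpr (div_nonpos_of_nonpos_of_nonneg (by linarith) (by linarith))
    have hF := one_div_sqrt_mul_sub_one_sub_one_div_nonneg hu1
    calc _ = exp (-γ / (2 * u)) * (exp ((2 * C₀ - σ) * (t * u)) * (1 + √(σ₃ * (t * u)))) *
          (1 / √(u * (u - 1)) - 1 / u) := by ring
      _ ≤ 1 * K * (1 / √(u * (u - 1)) - 1 / u) := by gcongr
      _ = K * (1 / √(u * (u - 1)) - 1 / u) := by rw [one_mul]

theorem stmt_5 (γ σ C₀ σ₃ : ℝ) (hγ : 0 < γ) (hσ : 0 < σ) (hσC₀ : 2 * C₀ < σ)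
    (hσ₃ : 0 ≤ σ₃) :
    ∃ C : ℝ, 0 < C ∧ ∀ t : ℝ, 0 < t →
      (∫ s in Ioi (0 : ℝ),
          Real.exp (-γ * t / (2 * s)) * Real.exp ((2 * C₀ - σ) * s) *
            (1 + Real.sqrt (σ₃ * s)) * (1 / Real.sqrt s) *
            |1 / Real.sqrt s - (if t ≤ s then 1 / Real.sqrt (s - t) else 0)|) =
        (∫ u in Ioi (0 : ℝ),
          Real.exp (-γ / (2 * u)) * Real.exp ((2 * C₀ - σ) * (t * u)) *
            (1 + Real.sqrt (σ₃ * (t * u))) *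
            |1 / u - (if 1 ≤ u then 1 / Real.sqrt (u * (u - 1)) else 0)|) ∧
      (∫ s in Ioi (0 : ℝ),
          Real.exp (-γ * t / (2 * s)) * Real.exp ((2 * C₀ - σ) * s) *
            (1 + Real.sqrt (σ₃ * s)) * (1 / Real.sqrt s) *
            |1 / Real.sqrt s - (if t ≤ s then 1 / Real.sqrt (s - t) else 0)|) ≤
        C * ((∫ u in Ioc (0 : ℝ) 1, Real.exp (-γ / (2 * u)) / u) +
             (∫ u in Ioi (1 : ℝ), (1 / Real.sqrt (u * (u - 1)) - 1 / u))) :=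
  stmt_5_general γ σ C₀ σ₃ hγ hσC₀
end

section
/- Let (X, d, μ) be a metric measure space and y ∈ X. Suppose there exist constants C > 0, m ≥ 0, σ₁ ≥ 0 such that μ(B(y, αr)) ≤ C μ(B(y, r)) α^m e^{σ₁(α−1) r} for all r > 0 and α > 1. Then for every γ > 0 there exist constants C_γ > 0 and c̃ = σ₁²/(2γ) such that for all s, t > 0, ∫_{d(x,y) ≥ √t} e^{−2γ d(x,y)²/s} μ(dx) ≤ C_γ μ(B(y, √s)) e^{−γ t/s} e^{c̃ s}. -/
open MeasureTheory Metric ENNReal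

/-- Set-lintegral bound on a possibly non-measurable set from a pointwise bound on the set. -/
lemma setLIntegral_le_of_forall_le {X : Type*} [MeasurableSpace X] (μ : Measure X)
    {A : Set X} {f : X → ℝ≥0∞} {c : ℝ≥0∞} (h : ∀ x ∈ A, f x ≤ c) :
    ∫⁻ x in A, f x ∂μ ≤ c * μ A := by
  rw [MeasureTheory.lintegral]
  refine iSup₂_le fun g hg => ?_
  rw [← SimpleFunc.lintegral_eq_lintegral]
  calc ∫⁻ x, g x ∂(μ.restrict A) ≤ ∫⁻ _, c ∂(μ.restrict A) := by
        refine lintegral_mono_ae ?_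
        rw [Filter.eventually_iff, mem_ae_iff]
        have hmeas : MeasurableSet {x | c < g x} :=
          measurableSet_lt measurable_const g.measurable
        have hcompl : {x | g x ≤ c}ᶜ = {x | c < g x} := by
          ext x; simp [not_le]
        have hempty : {x | c < g x} ∩ A = ∅ := by
          rw [Set.eq_empty_iff_forall_notMem]
          rintro x ⟨hx1, hx2⟩
          exact absurd ((hg x).trans (h x hx2)) (not_le.mpr hx1)
        rw [hcompl, Measure.restrict_apply hmeas, hempty, measure_empty]
  _ = c * μ A := by rw [lintegral_const, Measure.restrict_apply_univ]

lemma keyreal (C m σ₁ γ u t s : ℝ) (hC : 0 < C) (hm : 0 ≤ m) (hσ₁ : 0 ≤ σ₁) (hγ : 0 < γ)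
    (hs : 0 < s) (hu : u = Real.sqrt s) (a : ℝ) (ha : 0 ≤ a) :
    Real.exp (-γ * t / s - γ * a ^ 2) * (C * (a + 2) ^ m * Real.exp (σ₁ * (a + 1) * u)) ≤
      max 1 (C * Real.exp (2 * m ^ 2 / γ + 7 * γ)) * Real.exp (-(γ / 4) * a) *
        (Real.exp (-γ * t / s) * Real.exp (σ₁ ^ 2 / (2 * γ) * s)) := by
  have hu0 : 0 ≤ u := hu ▸ Real.sqrt_nonneg s
  have hsu : u ^ 2 = s := by rw [hu, Real.sq_sqrt hs.le]
  have h1 : (a + 2) ^ m ≤ Real.exp (m * (a + 1)) := by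
    calc (a + 2) ^ m ≤ Real.exp (a + 1) ^ m := by
          refine Real.rpow_le_rpow (by linarith) ?_ hm
          have := Real.add_one_le_exp (a + 1); linarith
      _ = Real.exp ((a + 1) * m) := (Real.exp_mul _ _).symm
      _ = Real.exp (m * (a + 1)) := by ring_nf
  have key : γ * (m * (a + 1) + σ₁ * (a + 1) * u - γ * a ^ 2) ≤
      γ * (2 * m ^ 2 / γ + 7 * γ - γ / 4 * a + σ₁ ^ 2 / (2 * γ) * s) := by
    have e1 : γ * (2 * m ^ 2 / γ) = 2 * m ^ 2 := by field_simp
    have e2 : γ * (σ₁ ^ 2 / (2 * γ) * s) = σ₁ ^ 2 * u ^ 2 / 2 := by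
      rw [← hsu]; field_simp
    nlinarith [sq_nonneg (γ * a - 2 * m), sq_nonneg (γ - 2 * m),
      sq_nonneg (σ₁ * u - γ * (a + 1)), sq_nonneg (γ * (2 * a - 5)), mul_pos hγ hγ]
  have h2 : m * (a + 1) + σ₁ * (a + 1) * u - γ * a ^ 2 ≤
      2 * m ^ 2 / γ + 7 * γ - γ / 4 * a + σ₁ ^ 2 / (2 * γ) * s :=
    le_of_mul_le_mul_left key hγ
  calc Real.exp (-γ * t / s - γ * a ^ 2) * (C * (a + 2) ^ m * Real.exp (σ₁ * (a + 1) * u))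
      = C * ((a + 2) ^ m * (Real.exp (σ₁ * (a + 1) * u) * Real.exp (-γ * t / s - γ * a ^ 2))) := by
        ring
    _ ≤ C * (Real.exp (m * (a + 1)) *
          (Real.exp (σ₁ * (a + 1) * u) * Real.exp (-γ * t / s - γ * a ^ 2))) := by
        gcongr
    _ = C * Real.exp (m * (a + 1) + σ₁ * (a + 1) * u - γ * a ^ 2 + -γ * t / s) := by
        rw [← Real.exp_add, ← Real.exp_add]; ring_nf
    _ ≤ C * Real.exp (2 * m ^ 2 / γ + 7 * γ - γ / 4 * a + σ₁ ^ 2 / (2 * γ) * s + -γ * t / s) := by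
        refine mul_le_mul_of_nonneg_left (Real.exp_le_exp.2 (by linarith)) hC.le
    _ = C * Real.exp (2 * m ^ 2 / γ + 7 * γ) * Real.exp (-(γ / 4) * a) *
          (Real.exp (-γ * t / s) * Real.exp (σ₁ ^ 2 / (2 * γ) * s)) := by
        simp only [← Real.exp_add, mul_assoc]; ring_nf
    _ ≤ max 1 (C * Real.exp (2 * m ^ 2 / γ + 7 * γ)) * Real.exp (-(γ / 4) * a) *
          (Real.exp (-γ * t / s) * Real.exp (σ₁ ^ 2 / (2 * γ) * s)) := by
        gcongr
        exact le_max_right _ _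

theorem stmt_6 {X : Type*} [MetricSpace X] [MeasurableSpace X] (μ : Measure X) (y : X)
    (C m σ₁ : ℝ) (hC : 0 < C) (hm : 0 ≤ m) (hσ₁ : 0 ≤ σ₁)
    (hLD : ∀ r > (0 : ℝ), ∀ α > (1 : ℝ),
      μ (ball y (α * r)) ≤
        ENNReal.ofReal (C * α ^ m * Real.exp (σ₁ * (α - 1) * r)) * μ (ball y r))
    (γ : ℝ) (hγ : 0 < γ) :
    ∃ Cγ > (0 : ℝ), ∀ s > (0 : ℝ), ∀ t > (0 : ℝ),
      (∫⁻ x in {x : X | Real.sqrt t ≤ dist x y},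
          ENNReal.ofReal (Real.exp (-2 * γ * dist x y ^ 2 / s)) ∂μ) ≤
        ENNReal.ofReal (Cγ * Real.exp (-γ * t / s) *
            Real.exp (σ₁ ^ 2 / (2 * γ) * s)) * μ (ball y (Real.sqrt s)) := by
  set q : ℝ := Real.exp (-(γ / 4)) with hqdef
  have hq0 : 0 < q := Real.exp_pos _
  have hq1 : q < 1 := Real.exp_lt_one_iff.2 (by linarith)
  set C' : ℝ := max 1 (C * Real.exp (2 * m ^ 2 / γ + 7 * γ)) with hC'def
  have hC'1 : (1 : ℝ) ≤ C' := le_max_left _ _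
  have h1q : (0:ℝ) < 1 - q := by linarith
  refine ⟨C' * (1 - q)⁻¹, by positivity, fun s hs t ht => ?_⟩
  set u : ℝ := Real.sqrt s with hudef
  have hu : 0 < u := Real.sqrt_pos.2 hs
  set S : Set X := {x : X | Real.sqrt t ≤ dist x y} with hSdef
  set D : ℕ → Set X := fun k => ball y (((k : ℝ) + 1) * u) \ ball y ((k : ℝ) * u) with hDdef
  have hcover : S ⊆ ⋃ k, S ∩ D k := by
    intro x hx
    have hd : 0 ≤ dist x y := dist_nonneg
    refine Set.mem_iUnion.2 ⟨⌊dist x y / u⌋₊, hx, ?_, ?_⟩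
    · simp only [mem_ball]
      rw [← div_lt_iff₀ hu]
      exact Nat.lt_floor_add_one _
    · simp only [mem_ball, not_lt]
      rw [← le_div_iff₀ hu]
      exact Nat.floor_le (div_nonneg hd hu.le)
  set E : ℝ := Real.exp (-γ * t / s) * Real.exp (σ₁ ^ 2 / (2 * γ) * s) with hEdef
  have hker : ∀ k : ℕ,
      (∫⁻ x in S ∩ D k, ENNReal.ofReal (Real.exp (-2 * γ * dist x y ^ 2 / s)) ∂μ) ≤
        ENNReal.ofReal (C' * q ^ k * E) * μ (ball y u) := by
    intro k
    set a : ℝ := (k : ℝ) with hadef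
    have ha : 0 ≤ a := Nat.cast_nonneg k
    have step1 : (∫⁻ x in S ∩ D k, ENNReal.ofReal (Real.exp (-2 * γ * dist x y ^ 2 / s)) ∂μ) ≤
        ENNReal.ofReal (Real.exp (-γ * t / s - γ * a ^ 2)) * μ (S ∩ D k) := by
      refine setLIntegral_le_of_forall_le μ fun x hx => ?_
      refine ENNReal.ofReal_le_ofReal (Real.exp_le_exp.2 ?_)
      have hxS : Real.sqrt t ≤ dist x y := hx.1
      have hxD : a * u ≤ dist x y := by
        have := hx.2.2
        simpa [mem_ball, dist_comm, not_lt] using this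
      have hts : t ≤ dist x y ^ 2 := by
        have h1 : Real.sqrt t ^ 2 ≤ dist x y ^ 2 :=
          pow_le_pow_left₀ (Real.sqrt_nonneg t) hxS 2
        rwa [Real.sq_sqrt ht.le] at h1
      have has : a ^ 2 * s ≤ dist x y ^ 2 := by
        have h1 : (a * u) ^ 2 ≤ dist x y ^ 2 :=
          pow_le_pow_left₀ (mul_nonneg ha hu.le) hxD 2
        have h2 : u ^ 2 = s := Real.sq_sqrt hs.le
        nlinarith
      rw [div_le_iff₀ hs, sub_mul, div_mul_cancel₀ _ hs.ne']
      have e1 : -γ * t / s * s = -γ * t := div_mul_cancel₀ _ hs.ne'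
      nlinarith [mul_le_mul_of_nonneg_left hts hγ.le, mul_le_mul_of_nonneg_left has hγ.le]
    have step2 : μ (S ∩ D k) ≤ μ (ball y ((a + 2) * u)) := by
      refine measure_mono fun x hx => ?_
      have := hx.2.1
      simp only [mem_ball] at this ⊢
      have : dist x y < (a + 1) * u := by simpa [hadef] using this
      nlinarith
    have step3 : μ (ball y ((a + 2) * u)) ≤
        ENNReal.ofReal (C * (a + 2) ^ m * Real.exp (σ₁ * (a + 1) * u)) * μ (ball y u) := by
      have h := hLD u hu (a + 2) (by linarith)
      have e : σ₁ * (a + 2 - 1) * u = σ₁ * (a + 1) * u := by ring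
      rwa [e] at h
    calc (∫⁻ x in S ∩ D k, ENNReal.ofReal (Real.exp (-2 * γ * dist x y ^ 2 / s)) ∂μ)
        ≤ ENNReal.ofReal (Real.exp (-γ * t / s - γ * a ^ 2)) * μ (S ∩ D k) := step1
      _ ≤ ENNReal.ofReal (Real.exp (-γ * t / s - γ * a ^ 2)) *
            (ENNReal.ofReal (C * (a + 2) ^ m * Real.exp (σ₁ * (a + 1) * u)) * μ (ball y u)) :=
          mul_le_mul_right (step2.trans step3) _
      _ = ENNReal.ofReal (Real.exp (-γ * t / s - γ * a ^ 2) *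
            (C * (a + 2) ^ m * Real.exp (σ₁ * (a + 1) * u))) * μ (ball y u) := by
          rw [← mul_assoc, ← ENNReal.ofReal_mul (Real.exp_pos _).le]
      _ ≤ ENNReal.ofReal (C' * q ^ k * E) * μ (ball y u) := by
          refine mul_le_mul_left (ENNReal.ofReal_le_ofReal ?_) _
          have hqk : q ^ k = Real.exp (-(γ / 4) * a) := by
            rw [hqdef, ← Real.exp_nat_mul, hadef]; ring_nf
          rw [hqk, hEdef]
          exact keyreal C m σ₁ γ u t s hC hm hσ₁ hγ hs hudef a ha
  have hsum : ∑' k : ℕ, ENNReal.ofReal (C' * q ^ k * E) =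
      ENNReal.ofReal (C' * (1 - q)⁻¹ * E) := by
    have hnn : ∀ k : ℕ, 0 ≤ C' * q ^ k * E := fun k => by positivity
    have hsummable : Summable fun k : ℕ => C' * q ^ k * E := by
      have : (fun k : ℕ => C' * q ^ k * E) = fun k : ℕ => (C' * E) * q ^ k := by
        funext k; ring
      rw [this]
      exact (summable_geometric_of_lt_one hq0.le hq1).mul_left _
    rw [← ENNReal.ofReal_tsum_of_nonneg hnn hsummable]
    congr 1
    have : (fun k : ℕ => C' * q ^ k * E) = fun k : ℕ => (C' * E) * q ^ k := by
      funext k; ring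
    rw [this, tsum_mul_left, tsum_geometric_of_lt_one hq0.le hq1]
    ring
  calc (∫⁻ x in S, ENNReal.ofReal (Real.exp (-2 * γ * dist x y ^ 2 / s)) ∂μ)
      ≤ ∫⁻ x in ⋃ k, S ∩ D k, ENNReal.ofReal (Real.exp (-2 * γ * dist x y ^ 2 / s)) ∂μ :=
        lintegral_mono_set hcover
    _ ≤ ∑' k : ℕ, ∫⁻ x in S ∩ D k, ENNReal.ofReal (Real.exp (-2 * γ * dist x y ^ 2 / s)) ∂μ :=
        lintegral_iUnion_le _ _
    _ ≤ ∑' k : ℕ, ENNReal.ofReal (C' * q ^ k * E) * μ (ball y u) :=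
        ENNReal.tsum_le_tsum hker
    _ = (∑' k : ℕ, ENNReal.ofReal (C' * q ^ k * E)) * μ (ball y u) := ENNReal.tsum_mul_right
    _ = ENNReal.ofReal (C' * (1 - q)⁻¹ * Real.exp (-γ * t / s) *
          Real.exp (σ₁ ^ 2 / (2 * γ) * s)) * μ (ball y u) := by
        rw [hsum, hEdef, ← mul_assoc]
end
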